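/- Let s and e be composable labelled transition systems and σ ∈ (L_{s‖e}^δ)*. If s and e are mutually accepting, then σ ∈ Utraces(s ‖ e) if and only if σ↾L_s^δ ∈ Utraces(s) and σ↾L_e^δ ∈ Utraces(e). -/

import Mathlib

/-- Visible labels extended with the quiescence label `δ`. -/
inductive DLabel (A : Type) where
  | act : A → DLabel A
  | δ : DLabel A
deriving DecidableEq

/-- A labelled transition system with state type `S` and label type `A`.
`T p none p'` is an internal (τ) transition; `T p (some a) p'` a visible one.
The set of states is the whole type `S`; the initial state is `q0`. -/
structure LTS (S : Type) (A : Type) where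
  T : S → Option A → S → Prop
  I : Set A
  U : Set A
  q0 : S

namespace LTS

variable {S E F A : Type}

/-- The set of visible labels. -/
def L (s : LTS S A) : Set A := s.I ∪ s.U

/-- Well-formedness of an LTS: countably many states and labels, inputs and
outputs disjoint, and visible transitions labelled in `I ∪ U`. -/
def WF (s : LTS S A) : Prop :=
  Countable S ∧ s.I.Countable ∧ s.U.Countable ∧ Disjoint s.I s.U ∧
    ∀ p a q, s.T p (some a) q → a ∈ s.L

/-- A state is quiescent if it has no output transitions and no τ-transitions. -/
def quiescent (s : LTS S A) (p : S) : Prop :=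
  (∀ x ∈ s.U, ∀ p', ¬ s.T p (some x) p') ∧ (∀ p', ¬ s.T p none p')

/-- Single-step transition relation for δ-extended labels: `δ` is a self-loop
on quiescent states. -/
def dstep (s : LTS S A) (p : S) : DLabel A → S → Prop
  | .act a, p' => s.T p (some a) p'
  | .δ, p' => p = p' ∧ s.quiescent p

/-- `eps p p'`: `p'` is reachable from `p` by finitely many τ-transitions. -/
def eps (s : LTS S A) : S → S → Prop :=
  Relation.ReflTransGen (fun p q => s.T p none q)

/-- Weak transition relation `p ⟹σ p'` over δ-extended traces. -/
def wtrans (s : LTS S A) : S → List (DLabel A) → S → Prop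
  | p, [], p' => s.eps p p'
  | p, ℓ :: σ, p'' => ∃ p1 p2, s.eps p p1 ∧ s.dstep p1 ℓ p2 ∧ s.wtrans p2 σ p''

/-- The δ-extended label set `L^δ` as a set of `DLabel`s. -/
def Ld (s : LTS S A) : Set (DLabel A) := (DLabel.act '' s.L) ∪ {DLabel.δ}

/-- `Utraces s`: δ-extended traces of `s` (from the initial state) that never
pass through a state refusing a subsequent input of the trace. -/
def Utraces (s : LTS S A) : Set (List (DLabel A)) :=
  { σ | (∀ ℓ ∈ σ, ℓ ∈ s.Ld) ∧ (∃ p, s.wtrans s.q0 σ p) ∧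
      ∀ σ1 a σ2, σ = σ1 ++ DLabel.act a :: σ2 → a ∈ s.I →
        ∀ p, s.wtrans s.q0 σ1 p → ∃ p', s.wtrans p [DLabel.act a] p' }

/-- `out p`: the outputs (including quiescence δ) enabled in state `p`. -/
def out (s : LTS S A) (p : S) : Set (DLabel A) :=
  { x | match x with
        | .act a => a ∈ s.U ∧ ∃ p', s.T p (some a) p'
        | .δ => s.quiescent p }

/-- `out` of a set of states. -/
def outSet (s : LTS S A) (P : Set S) : Set (DLabel A) := ⋃ p ∈ P, s.out p

/-- `inp p`: the inputs weakly enabled in state `p`. -/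
def inp (s : LTS S A) (p : S) : Set A :=
  { a | a ∈ s.I ∧ ∃ p', s.wtrans p [DLabel.act a] p' }

/-- The states reached from the initial state after trace `σ`. -/
def after (s : LTS S A) (σ : List (DLabel A)) : Set S :=
  { p' | s.wtrans s.q0 σ p' }

/-- Input-enabledness: every input is weakly enabled in every state. -/
def IOTS (s : LTS S A) : Prop :=
  ∀ q : S, ∀ a ∈ s.I, ∃ q', s.wtrans q [DLabel.act a] q'

/-- Two LTSs are composable iff their output sets are disjoint. -/
def Composable (s : LTS S A) (e : LTS E A) : Prop := Disjoint s.U e.U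

/-- Parallel composition of two LTSs: synchronisation on shared labels,
interleaving on non-shared labels and τ. -/
def par (s : LTS S A) (e : LTS E A) : LTS (S × E) A where
  I := (s.I \ e.U) ∪ (e.I \ s.U)
  U := s.U ∪ e.U
  q0 := (s.q0, e.q0)
  T := fun x ℓ y =>
    (s.T x.1 ℓ y.1 ∧ y.2 = x.2 ∧ (ℓ = none ∨ ∃ a ∈ s.L, ℓ = some a) ∧
      ∀ a ∈ e.L, ℓ ≠ some a) ∨
    (e.T x.2 ℓ y.2 ∧ y.1 = x.1 ∧ (ℓ = none ∨ ∃ a ∈ e.L, ℓ = some a) ∧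
      ∀ a ∈ s.L, ℓ ≠ some a) ∨
    (∃ a ∈ s.L ∩ e.L, ℓ = some a ∧ s.T x.1 (some a) y.1 ∧ e.T x.2 (some a) y.2)

/-- The uioco implementation relation. -/
def uioco (i : LTS E A) (s : LTS S A) : Prop :=
  ∀ σ ∈ s.Utraces, i.outSet (i.after σ) ⊆ s.outSet (s.after σ)

/-- `s.Accepts e`: along every Utrace of `s ‖ e`, every output of `e` that is an
input label of `s` is actually accepted by `s` and is an output of `e`. -/
def Accepts (s : LTS S A) (e : LTS E A) : Prop :=
  ∀ σ ∈ (s.par e).Utraces, ∀ p q, (s.par e).wtrans (s.par e).q0 σ (p, q) →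
    ∀ a, DLabel.act a ∈ e.out q → a ∈ s.I → a ∈ s.inp p ∧ a ∈ e.U

/-- Mutual acceptance. -/
def MutuallyAccepts (s : LTS S A) (e : LTS E A) : Prop := s.Accepts e ∧ e.Accepts s

/-- Isomorphism of LTSs: equal label sets and a bijection on states preserving
the initial state and all transitions (including τ and δ). -/
def Isomorphic (s : LTS S A) (s' : LTS E A) : Prop :=
  s.I = s'.I ∧ s.U = s'.U ∧ ∃ f : S ≃ E, f s.q0 = s'.q0 ∧
    (∀ p p' ℓ, s.T p ℓ p' ↔ s'.T (f p) ℓ (f p')) ∧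
    (∀ p p', s.dstep p DLabel.δ p' ↔ s'.dstep (f p) DLabel.δ (f p'))

open Classical in
/-- Projection of a trace onto a set of labels. -/
noncomputable def proj : List (DLabel A) → Set (DLabel A) → List (DLabel A)
  | [], _ => []
  | ℓ :: σ, 𝓛 => if ℓ ∈ 𝓛 then ℓ :: proj σ 𝓛 else proj σ 𝓛

end LTS

/-
Runs of `s ‖ e` project onto runs of the components, and runs of the components along the two
projections of a trace interleave into a run of `s ‖ e`, step by step, except at quiescence: a
quiescent state of `s ‖ e` might hide an output of one component on which the other refuses to
synchronise. By composability such an output is an input of the other component, so along a Utrace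
mutual acceptance provides the synchronisation, and the component states are quiescent as well.
The input condition of Utraces transfers the same way: an input of `s` that `e` offers is enabled
in `s` by acceptance, and any other input of `s` is an input of `s ‖ e`. Only the left component
is treated; the right one follows from `s ‖ e ≅ e ‖ s`.
-/

namespace LTS

open Relation

variable {S E A : Type}

section Weak

variable {s : LTS S A}

lemma eps_wtrans_trans {p q r : S} {σ : List (DLabel A)} (h : s.eps p q) (h' : s.wtrans q σ r) :
    s.wtrans p σ r := by
  cases σ with
  | nil => exact h.trans h'
  | cons ℓ σ =>
    obtain ⟨p1, p2, hp1, hstep, hp2⟩ := h'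
    exact ⟨p1, p2, h.trans hp1, hstep, hp2⟩

lemma wtrans_eps_trans {σ : List (DLabel A)} {p q r : S} (h : s.wtrans p σ q) (h' : s.eps q r) :
    s.wtrans p σ r := by
  induction σ generalizing p with
  | nil => exact ReflTransGen.trans h h'
  | cons ℓ σ ih =>
    obtain ⟨p1, p2, hp1, hstep, hp2⟩ := h
    exact ⟨p1, p2, hp1, hstep, ih hp2⟩

lemma wtrans_append {σ1 σ2 : List (DLabel A)} {p r : S} :
    s.wtrans p (σ1 ++ σ2) r ↔ ∃ q, s.wtrans p σ1 q ∧ s.wtrans q σ2 r := by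
  induction σ1 generalizing p with
  | nil => exact ⟨fun h => ⟨p, .refl, h⟩, fun ⟨q, hq, h⟩ => eps_wtrans_trans hq h⟩
  | cons ℓ σ1 ih =>
    constructor
    · rintro ⟨p1, p2, hp1, hstep, hp2⟩
      obtain ⟨q, hq, hr⟩ := ih.1 hp2
      exact ⟨q, ⟨p1, p2, hp1, hstep, hq⟩, hr⟩
    · rintro ⟨q, ⟨p1, p2, hp1, hstep, hq⟩, hr⟩
      exact ⟨p1, p2, hp1, hstep, ih.2 ⟨q, hq, hr⟩⟩

lemma eq_of_eps_of_forall_not_tau {p q : S} (hp : ∀ p', ¬ s.T p none p') (h : s.eps p q) :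
    q = p := by
  rcases h.cases_head with rfl | ⟨p', hp', -⟩
  · rfl
  · exact absurd hp' (hp p')

lemma mem_Utraces_of_append {σ1 σ2 : List (DLabel A)} (h : σ1 ++ σ2 ∈ s.Utraces) :
    σ1 ∈ s.Utraces := by
  obtain ⟨hlab, ⟨p, hp⟩, hin⟩ := h
  obtain ⟨q, hq, -⟩ := wtrans_append.1 hp
  refine ⟨fun ℓ hℓ => hlab ℓ (List.mem_append_left _ hℓ), ⟨q, hq⟩, ?_⟩
  rintro τ1 a τ2 rfl
  exact hin τ1 a (τ2 ++ σ2) (by simp)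

end Weak

section Proj

variable {𝓛 : Set (DLabel A)}

open Classical in
lemma proj_eq_filter (σ : List (DLabel A)) :
    proj σ 𝓛 = σ.filter (fun ℓ => decide (ℓ ∈ 𝓛)) := by
  induction σ with
  | nil => rfl
  | cons ℓ σ ih => by_cases h : ℓ ∈ 𝓛 <;> simp [proj, h, ih]

lemma proj_append (σ1 σ2 : List (DLabel A)) : proj (σ1 ++ σ2) 𝓛 = proj σ1 𝓛 ++ proj σ2 𝓛 := by
  simp only [proj_eq_filter, List.filter_append]

lemma mem_proj {ℓ : DLabel A} {σ : List (DLabel A)} : ℓ ∈ proj σ 𝓛 ↔ ℓ ∈ σ ∧ ℓ ∈ 𝓛 := by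
  simp [proj_eq_filter]

lemma proj_cons_of_mem {ℓ : DLabel A} (σ : List (DLabel A)) (h : ℓ ∈ 𝓛) :
    proj (ℓ :: σ) 𝓛 = ℓ :: proj σ 𝓛 := by
  simp [proj, h]

lemma proj_singleton_of_mem {ℓ : DLabel A} (h : ℓ ∈ 𝓛) : proj [ℓ] 𝓛 = [ℓ] := by
  simp [proj, h]

lemma proj_singleton_of_not_mem {ℓ : DLabel A} (h : ℓ ∉ 𝓛) : proj [ℓ] 𝓛 = [] := by
  simp [proj, h]

lemma exists_eq_append_cons_of_proj_eq {σ σ1 σ2 : List (DLabel A)} {ℓ : DLabel A}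
    (h : proj σ 𝓛 = σ1 ++ ℓ :: σ2) : ∃ τ1 τ2, σ = τ1 ++ ℓ :: τ2 ∧ proj τ1 𝓛 = σ1 := by
  rw [proj_eq_filter] at h
  obtain ⟨τ1, ρ, rfl, hτ1, hρ⟩ := List.filter_eq_append_iff.1 h
  obtain ⟨ρ1, τ2, rfl, hρ1, -⟩ := List.filter_eq_cons_iff.1 hρ
  refine ⟨τ1 ++ ρ1, τ2, by simp, ?_⟩
  rw [proj_append, proj_eq_filter, proj_eq_filter, hτ1, List.filter_eq_nil_iff.2 hρ1,
    List.append_nil]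

end Proj

lemma act_mem_Ld {s : LTS S A} {a : A} : DLabel.act a ∈ s.Ld ↔ a ∈ s.L := by
  simp [Ld]

lemma delta_mem_Ld {s : LTS S A} : DLabel.δ ∈ s.Ld := by
  simp [Ld]

section Transport

variable {s : LTS S A} {s' : LTS E A} (f : S ≃ E)

lemma eps_map_iff (hT : ∀ p ℓ p', s'.T (f p) ℓ (f p') ↔ s.T p ℓ p') {p p' : S} :
    s'.eps (f p) (f p') ↔ s.eps p p' := by
  refine ⟨fun h => ?_, fun h => ReflTransGen.lift f (fun a b hab => (hT a none b).2 hab) _ _ h⟩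
  simpa [Function.onFun, eps] using ReflTransGen.lift (p := fun a b => s.T a none b) f.symm
    (fun a b hab => (hT (f.symm a) none (f.symm b)).1 (by simpa using hab)) _ _ h

lemma quiescent_map_iff (hT : ∀ p ℓ p', s'.T (f p) ℓ (f p') ↔ s.T p ℓ p') (hU : s'.U = s.U)
    {p : S} : s'.quiescent (f p) ↔ s.quiescent p := by
  simp only [quiescent, hU, f.surjective.forall, hT]

lemma dstep_map_iff (hT : ∀ p ℓ p', s'.T (f p) ℓ (f p') ↔ s.T p ℓ p') (hU : s'.U = s.U)
    {p p' : S} {ℓ : DLabel A} : s'.dstep (f p) ℓ (f p') ↔ s.dstep p ℓ p' := by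
  cases ℓ with
  | act a => exact hT _ _ _
  | δ => simp only [dstep, f.injective.eq_iff, quiescent_map_iff f hT hU]

lemma wtrans_map_iff (hT : ∀ p ℓ p', s'.T (f p) ℓ (f p') ↔ s.T p ℓ p') (hU : s'.U = s.U)
    {σ : List (DLabel A)} {p p' : S} : s'.wtrans (f p) σ (f p') ↔ s.wtrans p σ p' := by
  induction σ generalizing p with
  | nil => exact eps_map_iff f hT
  | cons ℓ σ ih =>
    simp only [wtrans, f.surjective.exists, eps_map_iff f hT, dstep_map_iff f hT hU, ih]

lemma Utraces_map (hT : ∀ p ℓ p', s'.T (f p) ℓ (f p') ↔ s.T p ℓ p') (hI : s'.I = s.I)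
    (hU : s'.U = s.U) (hq0 : f s.q0 = s'.q0) : s'.Utraces = s.Utraces := by
  ext σ
  simp only [Utraces, Ld, L, hI, hU, ← hq0, f.surjective.exists,
    f.surjective.forall, wtrans_map_iff f hT hU]

end Transport

section Par

variable {s : LTS S A} {e : LTS E A}

lemma L_par : (s.par e).L = s.L ∪ e.L := by
  ext a
  simp only [L, par, Set.mem_union, Set.mem_sdiff]
  tauto

lemma Ld_par : (s.par e).Ld = s.Ld ∪ e.Ld := by
  rw [Ld, L_par, Set.image_union, Set.union_union_distrib_right, Ld, Ld]

lemma I_par_inter_L_left_subset : (s.par e).I ∩ s.L ⊆ s.I := by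
  rintro a ⟨⟨ha, -⟩ | ⟨-, ha⟩, haL⟩
  exacts [ha, haL.resolve_right ha]

lemma I_par_inter_L_right_subset : (s.par e).I ∩ e.L ⊆ e.I := by
  rintro a ⟨⟨-, ha⟩ | ⟨ha, -⟩, haL⟩
  exacts [haL.resolve_right ha, ha]

lemma par_T_fst_tau {p p' : S} {q : E} (h : s.T p none p') : (s.par e).T (p, q) none (p', q) :=
  Or.inl ⟨h, rfl, Or.inl rfl, fun _ _ => nofun⟩

lemma par_T_snd_tau {p : S} {q q' : E} (h : e.T q none q') : (s.par e).T (p, q) none (p, q') :=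
  Or.inr (Or.inl ⟨h, rfl, Or.inl rfl, fun _ _ => nofun⟩)

lemma par_T_fst {p p' : S} {q : E} {a : A} (h : s.T p (some a) p') (hs : a ∈ s.L)
    (he : a ∉ e.L) : (s.par e).T (p, q) (some a) (p', q) :=
  Or.inl ⟨h, rfl, Or.inr ⟨a, hs, rfl⟩, fun _ hb hab => he (Option.some_injective _ hab ▸ hb)⟩

lemma par_T_snd {p : S} {q q' : E} {a : A} (h : e.T q (some a) q') (he : a ∈ e.L)
    (hs : a ∉ s.L) : (s.par e).T (p, q) (some a) (p, q') :=
  Or.inr (Or.inl ⟨h, rfl, Or.inr ⟨a, he, rfl⟩,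
    fun _ hb hab => hs (Option.some_injective _ hab ▸ hb)⟩)

lemma par_T_sync {p p' : S} {q q' : E} {a : A} (hs : s.T p (some a) p') (he : e.T q (some a) q')
    (has : a ∈ s.L) (hae : a ∈ e.L) : (s.par e).T (p, q) (some a) (p', q') :=
  Or.inr (Or.inr ⟨a, ⟨has, hae⟩, rfl, hs, he⟩)

lemma par_T_comm {x y : S × E} {ℓ : Option A} :
    (e.par s).T (Equiv.prodComm S E x) ℓ (Equiv.prodComm S E y) ↔ (s.par e).T x ℓ y := by
  constructor <;> rintro (h | h | ⟨a, ⟨ha, ha'⟩, h1, h2, h3⟩)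
  exacts [Or.inr (Or.inl h), Or.inl h, Or.inr (Or.inr ⟨a, ⟨ha', ha⟩, h1, h3, h2⟩),
    Or.inr (Or.inl h), Or.inl h, Or.inr (Or.inr ⟨a, ⟨ha', ha⟩, h1, h3, h2⟩)]

lemma T_fst_of_par_T {x y : S × E} {a : A} (h : (s.par e).T x (some a) y) (ha : a ∈ s.L) :
    s.T x.1 (some a) y.1 := by
  rcases h with ⟨h, -⟩ | ⟨-, -, -, hne⟩ | ⟨b, -, hb, h, -⟩
  · exact h
  · exact absurd rfl (hne a ha)
  · exact Option.some_injective _ hb ▸ h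

lemma fst_eq_of_par_T {x y : S × E} {a : A} (h : (s.par e).T x (some a) y) (ha : a ∉ s.L) :
    y.1 = x.1 := by
  rcases h with ⟨-, -, (hnone | ⟨b, hb, hab⟩), -⟩ | ⟨-, h, -⟩ | ⟨b, ⟨hb, -⟩, hab, -⟩
  · cases hnone
  · exact absurd (Option.some_injective _ hab ▸ hb) ha
  · exact h
  · exact absurd (Option.some_injective _ hab ▸ hb) ha

lemma eps_fst_of_eps_par {x y : S × E} (h : (s.par e).eps x y) : s.eps x.1 y.1 := by
  refine ReflTransGen.lift' Prod.fst (fun x y hxy => ?_) _ _ h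
  rcases hxy with ⟨hT, -⟩ | ⟨-, hy, -⟩ | ⟨_, -, ⟨⟩, -⟩
  · exact .single hT
  · show ReflTransGen _ x.1 y.1
    rw [hy]

lemma eps_par {p p' : S} {q q' : E} (hs : s.eps p p') (he : e.eps q q') :
    (s.par e).eps (p, q) (p', q') :=
  (ReflTransGen.lift (fun p => (p, q)) (fun _ _ => par_T_fst_tau) _ _ hs).trans
    (ReflTransGen.lift (fun q => (p', q)) (fun _ _ => par_T_snd_tau) _ _ he)

lemma quiescent_par {p : S} {q : E} (hp : s.quiescent p) (hq : e.quiescent q) :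
    (s.par e).quiescent (p, q) := by
  refine ⟨fun x hx y hT => ?_, fun y hT => ?_⟩
  · rcases hT with ⟨hT, -, -, hne⟩ | ⟨hT, -, -, hne⟩ | ⟨_, -, ⟨⟩, hTs, hTe⟩
    · exact hx.elim (hp.1 x · _ hT) (fun hxe => hne x (Or.inr hxe) rfl)
    · exact hx.elim (fun hxe => hne x (Or.inr hxe) rfl) (hq.1 x · _ hT)
    · exact hx.elim (hp.1 x · _ hTs) (hq.1 x · _ hTe)
  · rcases hT with ⟨hT, -⟩ | ⟨hT, -⟩ | ⟨_, -, ⟨⟩, -⟩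
    · exact hp.2 _ hT
    · exact hq.2 _ hT

lemma quiescent_par_comm {x : S × E} : (e.par s).quiescent x.swap ↔ (s.par e).quiescent x :=
  quiescent_map_iff (Equiv.prodComm S E) (fun _ _ _ => par_T_comm) (Set.union_comm _ _)

lemma wtrans_par_comm {x y : S × E} {σ : List (DLabel A)} :
    (e.par s).wtrans x.swap σ y.swap ↔ (s.par e).wtrans x σ y :=
  wtrans_map_iff (Equiv.prodComm S E) (fun _ _ _ => par_T_comm) (Set.union_comm _ _)

lemma Utraces_par_comm : (e.par s).Utraces = (s.par e).Utraces :=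
  Utraces_map (Equiv.prodComm S E) (fun _ _ _ => par_T_comm) (Set.union_comm _ _)
    (Set.union_comm _ _) rfl

end Par

section Projection

variable {s : LTS S A} {e : LTS E A}

lemma wtrans_proj_fst_of_wtrans_par_act {x y : S × E} {a : A}
    (h : (s.par e).wtrans x [.act a] y) : s.wtrans x.1 (proj [.act a] s.Ld) y.1 := by
  obtain ⟨x1, x2, hx1, hT, hy⟩ := h
  by_cases ha : a ∈ s.L
  · rw [proj_singleton_of_mem (act_mem_Ld.2 ha)]
    exact ⟨x1.1, x2.1, eps_fst_of_eps_par hx1, T_fst_of_par_T hT ha, eps_fst_of_eps_par hy⟩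
  · rw [proj_singleton_of_not_mem (mt act_mem_Ld.1 ha)]
    exact (eps_fst_of_eps_par hx1).trans (fst_eq_of_par_T hT ha ▸ eps_fst_of_eps_par hy)

lemma quiescent_snd_of_quiescent_par (hc : Composable s e) (hacc : s.Accepts e)
    {σ : List (DLabel A)} (hσ : σ ∈ (s.par e).Utraces) {p : S} {q : E}
    (h : (s.par e).wtrans (s.par e).q0 σ (p, q)) (hq : (s.par e).quiescent (p, q)) :
    e.quiescent q := by
  refine ⟨fun x hx q' hT => ?_, fun q' hT => hq.2 _ (par_T_snd_tau hT)⟩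
  by_cases hxs : x ∈ s.L
  · -- by composability `x` is an input of `s`, accepted by `p`, which has no τ-step
    have hxI : x ∈ s.I := hxs.resolve_right (Set.disjoint_right.1 hc hx)
    obtain ⟨⟨-, -, p1, p2, hp1, hT', -⟩, -⟩ := hacc σ hσ p q h x ⟨hx, q', hT⟩ hxI
    obtain rfl := eq_of_eps_of_forall_not_tau (fun p' hp' => hq.2 _ (par_T_fst_tau hp')) hp1
    exact hq.1 x (Or.inr hx) _ (par_T_sync hT' hT hxs (Or.inr hx))
  · exact hq.1 x (Or.inr hx) _ (par_T_snd hT (Or.inr hx) hxs)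

lemma quiescent_fst_of_quiescent_par (hc : Composable s e) (hacc : e.Accepts s)
    {σ : List (DLabel A)} (hσ : σ ∈ (s.par e).Utraces) {p : S} {q : E}
    (h : (s.par e).wtrans (s.par e).q0 σ (p, q)) (hq : (s.par e).quiescent (p, q)) :
    s.quiescent p :=
  quiescent_snd_of_quiescent_par hc.symm hacc (Utraces_par_comm.symm ▸ hσ)
    (wtrans_par_comm.2 h) (quiescent_par_comm.2 hq)

lemma wtrans_proj_fst_of_wtrans_par (hc : Composable s e) (hacc : e.Accepts s)
    {σ : List (DLabel A)} (hσ : σ ∈ (s.par e).Utraces) {y : S × E}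
    (h : (s.par e).wtrans (s.par e).q0 σ y) : s.wtrans s.q0 (proj σ s.Ld) y.1 := by
  induction σ using List.reverseRecOn generalizing y with
  | nil => exact eps_fst_of_eps_par h
  | append_singleton σ ℓ ih =>
    have hσ' := mem_Utraces_of_append hσ
    obtain ⟨x, hx, hxy⟩ := wtrans_append.1 h
    rw [proj_append]
    cases ℓ with
    | act a => exact wtrans_append.2 ⟨x.1, ih hσ' hx, wtrans_proj_fst_of_wtrans_par_act hxy⟩
    | δ =>
      obtain ⟨x1, x2, hx1, hstep, hy⟩ := hxy
      obtain ⟨hx12, hq⟩ : x1 = x2 ∧ (s.par e).quiescent x1 := hstep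
      subst hx12
      obtain rfl := eq_of_eps_of_forall_not_tau hq.2 hy
      have hy' := wtrans_eps_trans hx hx1
      rw [proj_singleton_of_mem delta_mem_Ld]
      exact wtrans_append.2 ⟨y.1, ih hσ' hy', y.1, y.1, .refl,
        ⟨rfl, quiescent_fst_of_quiescent_par hc hacc hσ' hy' hq⟩, .refl⟩

lemma wtrans_proj_snd_of_wtrans_par (hc : Composable s e) (hacc : s.Accepts e)
    {σ : List (DLabel A)} (hσ : σ ∈ (s.par e).Utraces) {y : S × E}
    (h : (s.par e).wtrans (s.par e).q0 σ y) : e.wtrans e.q0 (proj σ e.Ld) y.2 :=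
  wtrans_proj_fst_of_wtrans_par hc.symm hacc (Utraces_par_comm.symm ▸ hσ)
    (y := y.swap) (wtrans_par_comm.2 h)

end Projection

section Composition

variable {s : LTS S A} {e : LTS E A}

lemma wtrans_par_singleton_of_wtrans_proj {ℓ : DLabel A} (hℓ : ℓ ∈ (s.par e).Ld) {p p' : S}
    {q q' : E} (hp : s.wtrans p (proj [ℓ] s.Ld) p') (hq : e.wtrans q (proj [ℓ] e.Ld) q') :
    (s.par e).wtrans (p, q) [ℓ] (p', q') := by
  cases ℓ with
  | δ =>
    rw [proj_singleton_of_mem delta_mem_Ld] at hp hq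
    obtain ⟨p1, p2, hp1, ⟨hp12, hpq⟩, hp'⟩ := hp
    obtain ⟨q1, q2, hq1, ⟨hq12, hqq⟩, hq'⟩ := hq
    subst hp12 hq12
    exact ⟨(p1, q1), (p1, q1), eps_par hp1 hq1, ⟨rfl, quiescent_par hpq hqq⟩, eps_par hp' hq'⟩
  | act a =>
    by_cases has : a ∈ s.L <;> by_cases hae : a ∈ e.L
    · rw [proj_singleton_of_mem (act_mem_Ld.2 has)] at hp
      rw [proj_singleton_of_mem (act_mem_Ld.2 hae)] at hq
      obtain ⟨p1, p2, hp1, hTs, hp'⟩ := hp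
      obtain ⟨q1, q2, hq1, hTe, hq'⟩ := hq
      exact ⟨(p1, q1), (p2, q2), eps_par hp1 hq1, par_T_sync hTs hTe has hae, eps_par hp' hq'⟩
    · rw [proj_singleton_of_mem (act_mem_Ld.2 has)] at hp
      rw [proj_singleton_of_not_mem (mt act_mem_Ld.1 hae)] at hq
      obtain ⟨p1, p2, hp1, hTs, hp'⟩ := hp
      exact ⟨(p1, q), (p2, q), eps_par hp1 .refl, par_T_fst hTs has hae, eps_par hp' hq⟩
    · rw [proj_singleton_of_not_mem (mt act_mem_Ld.1 has)] at hp
      rw [proj_singleton_of_mem (act_mem_Ld.2 hae)] at hq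
      obtain ⟨q1, q2, hq1, hTe, hq'⟩ := hq
      exact ⟨(p, q1), (p, q2), eps_par .refl hq1, par_T_snd hTe hae has, eps_par hp hq'⟩
    · rw [Ld_par] at hℓ
      exact (hℓ.elim (has ∘ act_mem_Ld.1) (hae ∘ act_mem_Ld.1)).elim

lemma wtrans_par_of_wtrans_proj {σ : List (DLabel A)} (hσ : ∀ ℓ ∈ σ, ℓ ∈ (s.par e).Ld)
    {p p' : S} {q q' : E} (hp : s.wtrans p (proj σ s.Ld) p') (hq : e.wtrans q (proj σ e.Ld) q') :
    (s.par e).wtrans (p, q) σ (p', q') := by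
  induction σ generalizing p q with
  | nil => exact eps_par hp hq
  | cons ℓ σ ih =>
    rw [← List.singleton_append, proj_append] at hp hq
    obtain ⟨p1, hp1, hp'⟩ := wtrans_append.1 hp
    obtain ⟨q1, hq1, hq'⟩ := wtrans_append.1 hq
    exact wtrans_append (σ1 := [ℓ]).2 ⟨(p1, q1),
      wtrans_par_singleton_of_wtrans_proj (hσ ℓ List.mem_cons_self) hp1 hq1,
      ih (fun ℓ' hℓ' => hσ ℓ' (List.mem_cons_of_mem ℓ hℓ')) hp' hq'⟩

end Composition

lemma exists_wtrans_proj_input {s : LTS S A} {σ1 σ2 : List (DLabel A)} {a : A}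
    {𝓛 : Set (DLabel A)} (h : proj (σ1 ++ .act a :: σ2) 𝓛 ∈ s.Utraces)
    (ha : .act a ∈ 𝓛 → a ∈ s.I) {p : S} (hp : s.wtrans s.q0 (proj σ1 𝓛) p) :
    ∃ p', s.wtrans p (proj [.act a] 𝓛) p' := by
  by_cases haL : .act a ∈ 𝓛
  · rw [proj_singleton_of_mem haL]
    exact h.2.2 _ a _ (by rw [proj_append, proj_cons_of_mem _ haL]) (ha haL) p hp
  · exact ⟨p, by rw [proj_singleton_of_not_mem haL]; exact .refl⟩

lemma MutuallyAccepts.symm {s : LTS S A} {e : LTS E A} (h : s.MutuallyAccepts e) :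
    e.MutuallyAccepts s :=
  ⟨h.2, h.1⟩

lemma proj_fst_mem_Utraces_of_mem_Utraces_par {s : LTS S A} {e : LTS E A} (hc : Composable s e)
    (hma : s.MutuallyAccepts e) {σ : List (DLabel A)} (hσ : σ ∈ (s.par e).Utraces) :
    proj σ s.Ld ∈ s.Utraces := by
  obtain ⟨y, hy⟩ := hσ.2.1
  refine ⟨fun ℓ hℓ => (mem_proj.1 hℓ).2, ⟨y.1, wtrans_proj_fst_of_wtrans_par hc hma.2 hσ hy⟩, ?_⟩
  intro σ1 a σ2 hsplit haI p hp
  obtain ⟨τ1, τ2, rfl, rfl⟩ := exists_eq_append_cons_of_proj_eq hsplit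
  have hτ1 : τ1 ∈ (s.par e).Utraces := mem_Utraces_of_append hσ
  obtain ⟨x, hx, x1, x2, hx1, hT, -⟩ := wtrans_append.1 hy
  have hpq : (s.par e).wtrans (s.par e).q0 τ1 (p, x1.2) :=
    wtrans_par_of_wtrans_proj (fun ℓ hℓ => hσ.1 ℓ (List.mem_append_left _ hℓ)) hp
      (wtrans_proj_snd_of_wtrans_par hc hma.1 hτ1 (wtrans_eps_trans hx hx1))
  by_cases haU : a ∈ e.U
  · exact (hma.1 τ1 hτ1 p x1.2 hpq a ⟨haU, x2.2, T_fst_of_par_T (par_T_comm.2 hT) (Or.inr haU)⟩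
      haI).1.2
  · obtain ⟨z, hz⟩ := hσ.2.2 τ1 a τ2 rfl (Or.inl ⟨haI, haU⟩) _ hpq
    have hpz := wtrans_proj_fst_of_wtrans_par_act hz
    rw [proj_singleton_of_mem (act_mem_Ld.2 (Or.inl haI))] at hpz
    exact ⟨z.1, hpz⟩

lemma mem_Utraces_par_of_proj_mem_Utraces {s : LTS S A} {e : LTS E A} (hc : Composable s e)
    (hma : s.MutuallyAccepts e) {σ : List (DLabel A)} (hσ : ∀ ℓ ∈ σ, ℓ ∈ (s.par e).Ld)
    (hs : proj σ s.Ld ∈ s.Utraces) (he : proj σ e.Ld ∈ e.Utraces) : σ ∈ (s.par e).Utraces := by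
  induction hn : σ.length using Nat.strong_induction_on generalizing σ with
  | _ n ih =>
    obtain ⟨p, hp⟩ := hs.2.1
    obtain ⟨q, hq⟩ := he.2.1
    refine ⟨hσ, ⟨(p, q), wtrans_par_of_wtrans_proj hσ hp hq⟩, ?_⟩
    rintro σ1 a σ2 rfl haI y hy
    have hσ1 : σ1 ∈ (s.par e).Utraces :=
      ih σ1.length (by simp [← hn]) (fun ℓ hℓ => hσ ℓ (List.mem_append_left _ hℓ))
        (mem_Utraces_of_append (proj_append σ1 _ ▸ hs))
        (mem_Utraces_of_append (proj_append σ1 _ ▸ he)) rfl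
    obtain ⟨p', hp'⟩ := exists_wtrans_proj_input hs
      (fun ha => I_par_inter_L_left_subset ⟨haI, act_mem_Ld.1 ha⟩)
      (wtrans_proj_fst_of_wtrans_par hc hma.2 hσ1 hy)
    obtain ⟨q', hq'⟩ := exists_wtrans_proj_input he
      (fun ha => I_par_inter_L_right_subset ⟨haI, act_mem_Ld.1 ha⟩)
      (wtrans_proj_snd_of_wtrans_par hc hma.1 hσ1 hy)
    exact ⟨(p', q'), wtrans_par_singleton_of_wtrans_proj (hσ _ (by simp)) hp' hq'⟩

end LTS

theorem utraces_par_iff_of_mutuallyAccepts_general {S E A : Type} (s : LTS S A) (e : LTS E A)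
    (hc : LTS.Composable s e)
    (σ : List (DLabel A)) (hσ : ∀ x ∈ σ, x ∈ (s.par e).Ld)
    (hma : s.MutuallyAccepts e) :
    σ ∈ (s.par e).Utraces ↔
      LTS.proj σ s.Ld ∈ s.Utraces ∧ LTS.proj σ e.Ld ∈ e.Utraces :=
  ⟨fun h => ⟨LTS.proj_fst_mem_Utraces_of_mem_Utraces_par hc hma h,
      LTS.proj_fst_mem_Utraces_of_mem_Utraces_par hc.symm hma.symm (LTS.Utraces_par_comm ▸ h)⟩,
    fun h => LTS.mem_Utraces_par_of_proj_mem_Utraces hc hma hσ h.1 h.2⟩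

/-- for mutually accepting composable `s`, `e`, a trace is a
Utrace of `s ‖ e` iff its projections are Utraces of the components. -/
theorem utraces_par_iff_of_mutuallyAccepts {S E A : Type} (s : LTS S A) (e : LTS E A)
    (hs : s.WF) (he : e.WF) (hc : LTS.Composable s e)
    (σ : List (DLabel A)) (hσ : ∀ x ∈ σ, x ∈ (s.par e).Ld)
    (hma : s.MutuallyAccepts e) :
    σ ∈ (s.par e).Utraces ↔
      LTS.proj σ s.Ld ∈ s.Utraces ∧ LTS.proj σ e.Ld ∈ e.Utraces :=
  utraces_par_iff_of_mutuallyAccepts_general s e hc σ hσ hma
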